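/- arXiv:2408.12745 — 3 statements merged into one kernel-verified Lean document; each statement's English description precedes it below -/
import Mathlib

section
/- Let 0 < α < n and p measurable with p_+ < n/α; define q by 1/p(x) = α/n + 1/q(x). If p ∈ K_0^α(E) (fractional Kopaliani condition over a collection E), then both p ∈ K_0(E) and q ∈ K_0(E); conversely, if p, q ∈ K_0(E), then p ∈ K_0^α(E). -/
open MeasureTheory ENNReal Set

/-- The Luxemburg modular. -/
noncomputable def modularV {n : ℕ} (p : (Fin n → ℝ) → ℝ≥0∞) (f : (Fin n → ℝ) → ℝ) : ℝ≥0∞ :=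
  (∫⁻ x in {x | p x ≠ ∞}, (‖f x‖₊ : ℝ≥0∞) ^ (p x).toReal ∂volume) +
    eLpNormEssSup f (volume.restrict {x | p x = ∞})

/-- The Luxemburg norm on the variable Lebesgue space `L^{p(·)}`. -/
noncomputable def vnorm {n : ℕ} (p : (Fin n → ℝ) → ℝ≥0∞) (f : (Fin n → ℝ) → ℝ) : ℝ :=
  sInf {l : ℝ | 0 < l ∧ modularV p (fun x => f x / l) ≤ 1}

/-!
Both directions are instances of a Hölder inequality for norms of indicators. If
`1/r = 1/a + 1/b` pointwise and `l`, `k` are levels with `ρ_a(χ_E/l) ≤ 1`, `ρ_b(χ_E/k) ≤ 1`, the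
weighted AM–GM inequality gives `(l k)^{-r} ≤ l^{-a} + k^{-b}` on `E`, hence
`∫_E (l k)^{-r} ≤ 2`. Taking `b ≡ n/α`, for which `‖χ_E‖_b ≤ |E|^{α/n}`, gives
`‖χ_E‖_p ≤ 2 |E|^{α/n} ‖χ_E‖_q` and `‖χ_E‖_{q'} ≤ 2 |E|^{α/n} ‖χ_E‖_{p'}`, which yield the
forward direction. Taking instead `r ≡ 1/(1 + α/n)`, `a = p`, `b = q'` gives
`(|E|/2)^{1+α/n} ≤ ‖χ_E‖_p ‖χ_E‖_{q'}`, and multiplying the two `K_0` conditions yields the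
converse.
-/

theorem Real.mul_rpow_le_rpow_add_rpow {x y s t u : ℝ} (hx : 0 ≤ x) (hy : 0 ≤ y) (hs : 0 < s)
    (ht : 0 < t) (hu : u⁻¹ = s⁻¹ + t⁻¹) : (x * y) ^ u ≤ x ^ s + y ^ t := by
  have hu0 : 0 < u := inv_pos.1 (hu ▸ by positivity)
  have hw : u / s + u / t = 1 := by
    rw [div_eq_mul_inv, div_eq_mul_inv, ← mul_add, ← hu, mul_inv_cancel₀ hu0.ne']
  have hws : 0 ≤ u / s := by positivity
  have hwt : 0 ≤ u / t := by positivity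
  calc (x * y) ^ u = (x ^ s) ^ (u / s) * (y ^ t) ^ (u / t) := by
        rw [← Real.rpow_mul hx, ← Real.rpow_mul hy, mul_div_cancel₀ _ hs.ne',
          mul_div_cancel₀ _ ht.ne', Real.mul_rpow hx hy]
    _ ≤ u / s * x ^ s + u / t * y ^ t :=
        Real.geom_mean_le_arith_mean2_weighted hws hwt (by positivity) (by positivity) hw
    _ ≤ x ^ s + y ^ t := by
        gcongr
        · exact mul_le_of_le_one_left (by positivity) (by linarith)
        · exact mul_le_of_le_one_left (by positivity) (by linarith)

/-- An infinite exponent contributes nothing to the integral part of the modular; the bounds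
`x ≤ 1`, `y ≤ 1` are what the `L^∞` part of the modular provides there. -/
theorem mul_rpow_toReal_le_of_inv_eq_add {a b r : ℝ≥0∞} (hr : r ≠ ∞) (hrab : r⁻¹ = a⁻¹ + b⁻¹)
    {x y : ℝ} (hx : 0 ≤ x) (hy : 0 ≤ y) (hxa : a = ∞ → x ≤ 1) (hyb : b = ∞ → y ≤ 1) :
    (x * y) ^ r.toReal ≤
      (if a = ∞ then 0 else x ^ a.toReal) + (if b = ∞ then 0 else y ^ b.toReal) := by
  have hr0 : r⁻¹ ≠ 0 := ENNReal.inv_ne_zero.2 hr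
  by_cases ha : a = ∞
  · have hb : b ≠ ∞ := fun hb => hr0 (by simp [hrab, ha, hb])
    have hrb : r = b := by simpa [ha] using hrab
    simp only [ha, hb, if_true, if_false, zero_add, hrb]
    gcongr
    exact mul_le_of_le_one_left hy (hxa ha)
  by_cases hb : b = ∞
  · have hra : r = a := by simpa [hb] using hrab
    simp only [ha, hb, if_true, if_false, add_zero, hra]
    gcongr
    exact mul_le_of_le_one_right hx (hyb hb)
  simp only [ha, hb, if_false]
  by_cases ha0 : a = 0
  · have hr' : r = 0 := by simpa [ha0] using hrab
    simp [ha0, hr', Real.rpow_nonneg hy]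
  by_cases hb0 : b = 0
  · have hr' : r = 0 := by simpa [hb0] using hrab
    simp [hb0, hr', Real.rpow_nonneg hx]
  refine Real.mul_rpow_le_rpow_add_rpow hx hy (ENNReal.toReal_pos ha0 ha)
    (ENNReal.toReal_pos hb0 hb) ?_
  rw [← ENNReal.toReal_inv, ← ENNReal.toReal_inv, ← ENNReal.toReal_inv, hrab,
    ENNReal.toReal_add (ENNReal.inv_ne_top.2 ha0) (ENNReal.inv_ne_top.2 hb0)]

section Luxemburg

variable {n : ℕ} {r a b : (Fin n → ℝ) → ℝ≥0∞} {f : (Fin n → ℝ) → ℝ} {E : Set (Fin n → ℝ)}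

theorem vnorm_le_of_modularV_le_one {l : ℝ} (hl : 0 < l) (h : modularV r (fun x => f x / l) ≤ 1) :
    vnorm r f ≤ l :=
  csInf_le ⟨0, fun _ hk => hk.1.le⟩ ⟨hl, h⟩

theorem vnorm_nonneg : 0 ≤ vnorm r f :=
  Real.sInf_nonneg fun _ hl => hl.1.le

theorem le_vnorm_mul_vnorm {c : ℝ} (ha : ∃ l, 0 < l ∧ modularV a (fun x => f x / l) ≤ 1)
    (hb : ∃ k, 0 < k ∧ modularV b (fun x => f x / k) ≤ 1)
    (h : ∀ l k, 0 < l → 0 < k → modularV a (fun x => f x / l) ≤ 1 →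
      modularV b (fun x => f x / k) ≤ 1 → c ≤ l * k) :
    c ≤ vnorm a f * vnorm b f := by
  rcases le_or_gt c 0 with hc | hc
  · exact hc.trans (mul_nonneg vnorm_nonneg vnorm_nonneg)
  have hl : ∀ l, 0 < l → modularV a (fun x => f x / l) ≤ 1 → c ≤ l * vnorm b f :=
    fun l hl hla => by
      rw [← div_le_iff₀' hl]
      exact le_csInf hb fun k hk => by rw [div_le_iff₀' hl]; exact h l k hl hk.1 hla hk.2
  obtain ⟨l₀, hl₀, hl₀a⟩ := ha
  have hb0 : 0 < vnorm b f := pos_of_mul_pos_right (hc.trans_le (hl l₀ hl₀ hl₀a)) hl₀.le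
  rw [← div_le_iff₀ hb0]
  exact le_csInf ⟨l₀, hl₀, hl₀a⟩ fun l hl' => by rw [div_le_iff₀ hb0]; exact hl l hl'.1 hl'.2

theorem ae_enorm_le_one_of_modularV_le_one (hr : Measurable r) (h : modularV r f ≤ 1) :
    ∀ᵐ x, r x = ∞ → ‖f x‖ₑ ≤ 1 := by
  have hf := ae_le_eLpNormEssSup (f := f) (μ := volume.restrict {x | r x = ∞})
  rw [ae_restrict_iff' (measurableSet_eq_fun hr measurable_const)] at hf
  filter_upwards [hf] with x hx hxr
  exact (hx hxr).trans (le_add_self.trans h)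

theorem enorm_indicator_one_div {l : ℝ} (hl : 0 < l) (x : Fin n → ℝ) :
    ‖E.indicator (fun _ => (1 : ℝ)) x / l‖ₑ = E.indicator (fun _ => ENNReal.ofReal l⁻¹) x := by
  by_cases hx : x ∈ E
  · simp [hx, Real.enorm_eq_ofReal (inv_nonneg.2 hl.le)]
  · simp [hx]

theorem setLIntegral_indicator_rpow_inv_le_one (hr : Measurable r) (hE : MeasurableSet E)
    {l : ℝ} (hl : 0 < l) (h : modularV r (fun x => E.indicator (fun _ => (1 : ℝ)) x / l) ≤ 1) :
    ∫⁻ x in E, {x | r x ≠ ∞}.indicator (fun x => ENNReal.ofReal (l⁻¹ ^ (r x).toReal)) x ≤ 1 := by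
  have hS : MeasurableSet {x | r x ≠ ∞} := (hr (measurableSet_singleton ∞)).compl
  rw [setLIntegral_indicator hS]
  refine le_trans ?_ (le_self_add.trans h)
  calc ∫⁻ x in {x | r x ≠ ∞} ∩ E, ENNReal.ofReal (l⁻¹ ^ (r x).toReal)
      = ∫⁻ x in {x | r x ≠ ∞} ∩ E,
          ‖E.indicator (fun _ => (1 : ℝ)) x / l‖ₑ ^ (r x).toReal := by
        refine setLIntegral_congr_fun (hS.inter hE) fun x hx => ?_
        rw [enorm_indicator_one_div hl, indicator_of_mem hx.2,
          ENNReal.ofReal_rpow_of_pos (inv_pos.2 hl)]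
    _ ≤ _ := lintegral_mono_set inter_subset_left

theorem exists_modularV_indicator_div_le_one (hr : ∀ x, 1 ≤ r x) (hE : MeasurableSet E)
    (hE' : volume E ≠ ∞) :
    ∃ l, 0 < l ∧ modularV r (fun x => E.indicator (fun _ => (1 : ℝ)) x / l) ≤ 1 := by
  set l := (volume E).toReal + 1
  have hl : 0 < l := by positivity
  refine ⟨l, hl, ?_⟩
  have hl1 : ENNReal.ofReal l⁻¹ ≤ 1 :=
    ENNReal.ofReal_le_one.2 (inv_le_one_of_one_le₀ (by simp [l]))
  have hint : ∫⁻ x in {x | r x ≠ ∞}, ‖E.indicator (fun _ => (1 : ℝ)) x / l‖ₑ ^ (r x).toReal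
      ≤ ENNReal.ofReal l⁻¹ * volume E := by
    rw [← setLIntegral_const, ← lintegral_indicator hE]
    refine (setLIntegral_mono (measurable_const.indicator hE) fun x hx => ?_).trans
      (setLIntegral_le_lintegral _ _)
    rw [enorm_indicator_one_div hl]
    refine ENNReal.rpow_le_self_of_le_one (indicator_le (fun _ _ => hl1) x) ?_
    simpa using ENNReal.toReal_mono hx (hr x)
  have hsup : eLpNormEssSup (fun x => E.indicator (fun _ => (1 : ℝ)) x / l)
      (volume.restrict {x | r x = ∞}) ≤ ENNReal.ofReal l⁻¹ :=
    eLpNormEssSup_le_of_ae_enorm_bound (ae_of_all _ fun x => by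
      rw [enorm_indicator_one_div hl]; exact indicator_le (fun _ _ => le_rfl) x)
  calc modularV r (fun x => E.indicator (fun _ => (1 : ℝ)) x / l)
      ≤ ENNReal.ofReal l⁻¹ * volume E + ENNReal.ofReal l⁻¹ := add_le_add hint hsup
    _ = ENNReal.ofReal l⁻¹ * ENNReal.ofReal l := by
        rw [ENNReal.ofReal_add ENNReal.toReal_nonneg zero_le_one, ENNReal.ofReal_toReal hE',
          ENNReal.ofReal_one, mul_add, mul_one]
    _ = 1 := by rw [← ENNReal.ofReal_mul (inv_nonneg.2 hl.le), inv_mul_cancel₀ hl.ne',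
          ENNReal.ofReal_one]

theorem modularV_indicator_div_of_ne_top (hr : ∀ x, r x ≠ ∞) (hr0 : ∀ x, r x ≠ 0)
    (hE : MeasurableSet E) {l : ℝ} (hl : 0 < l) :
    modularV r (fun x => E.indicator (fun _ => (1 : ℝ)) x / l) =
      ∫⁻ x in E, ENNReal.ofReal (l⁻¹ ^ (r x).toReal) := by
  have htop : {x | r x = ∞} = ∅ := eq_empty_of_forall_notMem hr
  have hfin : {x | r x ≠ ∞} = univ := eq_univ_of_forall hr
  rw [modularV, htop, hfin, Measure.restrict_empty, eLpNormEssSup_measure_zero, add_zero,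
    Measure.restrict_univ, ← lintegral_indicator hE]
  congr 1 with x
  rw [← enorm_eq_nnnorm, enorm_indicator_one_div hl]
  by_cases hx : x ∈ E
  · simp [hx, ENNReal.ofReal_rpow_of_pos (inv_pos.2 hl)]
  · simp [hx, ENNReal.toReal_pos (hr0 x) (hr x)]

end Luxemburg

section Holder

variable {n : ℕ} {r a b : (Fin n → ℝ) → ℝ≥0∞} {E : Set (Fin n → ℝ)}

theorem setLIntegral_rpow_inv_mul_le_two (ha : Measurable a) (hb : Measurable b)
    (hE : MeasurableSet E) (hr : ∀ x, r x ≠ ∞) (hrab : ∀ x, (r x)⁻¹ = (a x)⁻¹ + (b x)⁻¹)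
    {l k : ℝ} (hl : 0 < l) (hk : 0 < k)
    (hla : modularV a (fun x => E.indicator (fun _ => (1 : ℝ)) x / l) ≤ 1)
    (hkb : modularV b (fun x => E.indicator (fun _ => (1 : ℝ)) x / k) ≤ 1) :
    ∫⁻ x in E, ENNReal.ofReal ((l * k)⁻¹ ^ (r x).toReal) ≤ 2 := by
  set A := {x | a x ≠ ∞}.indicator fun x => ENNReal.ofReal (l⁻¹ ^ (a x).toReal)
  set B := {x | b x ≠ ∞}.indicator fun x => ENNReal.ofReal (k⁻¹ ^ (b x).toReal)
  have hA : Measurable A :=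
    (by fun_prop : Measurable fun x => ENNReal.ofReal (l⁻¹ ^ (a x).toReal)).indicator
      (measurableSet_eq_fun ha measurable_const).compl
  have hpt : ∀ᵐ x ∂volume.restrict E, ENNReal.ofReal ((l * k)⁻¹ ^ (r x).toReal) ≤ A x + B x := by
    rw [ae_restrict_iff' hE]
    filter_upwards [ae_enorm_le_one_of_modularV_le_one ha hla,
      ae_enorm_le_one_of_modularV_le_one hb hkb] with x hla₁ hkb₁ hxE
    rw [enorm_indicator_one_div hl, indicator_of_mem hxE, ENNReal.ofReal_le_one] at hla₁
    rw [enorm_indicator_one_div hk, indicator_of_mem hxE, ENNReal.ofReal_le_one] at hkb₁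
    have key := mul_rpow_toReal_le_of_inv_eq_add (hr x) (hrab x) (inv_nonneg.2 hl.le)
      (inv_nonneg.2 hk.le) hla₁ hkb₁
    rw [mul_inv]
    refine (ENNReal.ofReal_le_ofReal key).trans ?_
    simp only [A, B, indicator_apply, mem_ofPred_eq, ite_not]
    split_ifs <;> simp [ENNReal.ofReal_add, Real.rpow_nonneg, hl.le, hk.le]
  calc ∫⁻ x in E, ENNReal.ofReal ((l * k)⁻¹ ^ (r x).toReal)
      ≤ ∫⁻ x in E, A x + B x := lintegral_mono_ae hpt
    _ = (∫⁻ x in E, A x) + ∫⁻ x in E, B x := lintegral_add_left hA _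
    _ ≤ 1 + 1 := add_le_add (setLIntegral_indicator_rpow_inv_le_one ha hE hl hla)
        (setLIntegral_indicator_rpow_inv_le_one hb hE hk hkb)
    _ = 2 := one_add_one_eq_two

theorem vnorm_indicator_le_two_mul_vnorm_mul_vnorm (ha : Measurable a) (hb : Measurable b)
    (hE : MeasurableSet E) (hr1 : ∀ x, 1 ≤ r x) (hr : ∀ x, r x ≠ ∞)
    (hrab : ∀ x, (r x)⁻¹ = (a x)⁻¹ + (b x)⁻¹)
    (ha' : ∃ l, 0 < l ∧ modularV a (fun x => E.indicator (fun _ => (1 : ℝ)) x / l) ≤ 1)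
    (hb' : ∃ k, 0 < k ∧ modularV b (fun x => E.indicator (fun _ => (1 : ℝ)) x / k) ≤ 1) :
    vnorm r (E.indicator fun _ => 1) ≤
      2 * (vnorm a (E.indicator fun _ => 1) * vnorm b (E.indicator fun _ => 1)) := by
  rw [← div_le_iff₀' two_pos]
  refine le_vnorm_mul_vnorm ha' hb' fun l k hl hk hla hkb => ?_
  rw [div_le_iff₀' two_pos, ← mul_assoc]
  refine vnorm_le_of_modularV_le_one (by positivity) ?_
  rw [modularV_indicator_div_of_ne_top hr (fun x => (zero_lt_one.trans_le (hr1 x)).ne') hE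
    (by positivity)]
  calc ∫⁻ x in E, ENNReal.ofReal ((2 * l * k)⁻¹ ^ (r x).toReal)
      ≤ ∫⁻ x in E, ENNReal.ofReal 2⁻¹ * ENNReal.ofReal ((l * k)⁻¹ ^ (r x).toReal) := by
        refine lintegral_mono fun x => ?_
        rw [← ENNReal.ofReal_mul (by norm_num), mul_assoc, mul_inv,
          Real.mul_rpow (by norm_num) (by positivity)]
        gcongr
        exact Real.rpow_le_self_of_le_one (by norm_num) (by norm_num)
          (by simpa using ENNReal.toReal_mono (hr x) (hr1 x))
    _ = ENNReal.ofReal 2⁻¹ * ∫⁻ x in E, ENNReal.ofReal ((l * k)⁻¹ ^ (r x).toReal) :=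
        lintegral_const_mul' _ _ ENNReal.ofReal_ne_top
    _ ≤ ENNReal.ofReal 2⁻¹ * 2 := by
        gcongr
        exact setLIntegral_rpow_inv_mul_le_two ha hb hE hr hrab hl hk hla hkb
    _ = 1 := by
        rw [ENNReal.ofReal_inv_of_pos two_pos, ENNReal.ofReal_ofNat,
          ENNReal.inv_mul_cancel two_ne_zero ENNReal.ofNat_ne_top]

theorem rpow_le_vnorm_mul_vnorm (ha : Measurable a) (hb : Measurable b) (hE : MeasurableSet E)
    {s : ℝ} (hs : 0 < s) (hab : ∀ x, ENNReal.ofReal s = (a x)⁻¹ + (b x)⁻¹)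
    (ha' : ∃ l, 0 < l ∧ modularV a (fun x => E.indicator (fun _ => (1 : ℝ)) x / l) ≤ 1)
    (hb' : ∃ k, 0 < k ∧ modularV b (fun x => E.indicator (fun _ => (1 : ℝ)) x / k) ≤ 1) :
    ((volume E).toReal / 2) ^ s ≤
      vnorm a (E.indicator fun _ => 1) * vnorm b (E.indicator fun _ => 1) := by
  refine le_vnorm_mul_vnorm ha' hb' fun l k hl hk hla hkb => ?_
  have hlk : 0 < l * k := mul_pos hl hk
  have h := setLIntegral_rpow_inv_mul_le_two (r := fun _ => (ENNReal.ofReal s)⁻¹) ha hb hE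
    (fun _ => ENNReal.inv_ne_top.2 (ENNReal.ofReal_pos.2 hs).ne')
    (fun x => by rw [inv_inv]; exact hab x) hl hk hla hkb
  rw [setLIntegral_const, ENNReal.toReal_inv, ENNReal.toReal_ofReal hs.le] at h
  have hT : (volume E).toReal / 2 ≤ (l * k) ^ s⁻¹ := by
    have h' := ENNReal.toReal_mono ENNReal.ofNat_ne_top h
    rw [ENNReal.toReal_mul, ENNReal.toReal_ofReal (by positivity), Real.inv_rpow hlk.le] at h'
    rw [div_le_iff₀ two_pos]
    rw [inv_mul_le_iff₀ (by positivity)] at h'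
    simpa [mul_comm] using h'
  calc ((volume E).toReal / 2) ^ s ≤ ((l * k) ^ s⁻¹) ^ s := by gcongr
    _ = l * k := Real.rpow_inv_rpow hlk.le hs.ne'

theorem modularV_const_inv_indicator_div_rpow (hE : MeasurableSet E) (hE₀ : volume E ≠ 0)
    (hE' : volume E ≠ ∞) {γ : ℝ} (hγ : 0 < γ) :
    modularV (fun _ => (ENNReal.ofReal γ)⁻¹)
      (fun x => E.indicator (fun _ => (1 : ℝ)) x / (volume E).toReal ^ γ) = 1 := by
  have hT : 0 < (volume E).toReal := ENNReal.toReal_pos hE₀ hE'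
  rw [modularV_indicator_div_of_ne_top (fun _ => ENNReal.inv_ne_top.2 (ENNReal.ofReal_pos.2 hγ).ne')
    (fun _ => ENNReal.inv_ne_zero.2 ENNReal.ofReal_ne_top) hE (by positivity),
    setLIntegral_const, ENNReal.toReal_inv, ENNReal.toReal_ofReal hγ.le,
    Real.inv_rpow (by positivity), Real.rpow_rpow_inv hT.le hγ.ne',
    ENNReal.ofReal_inv_of_pos hT, ENNReal.ofReal_toReal hE', ENNReal.inv_mul_cancel hE₀ hE']

end Holder

theorem vnorm_indicator_le_two_mul_rpow {n : ℕ} {r a : (Fin n → ℝ) → ℝ≥0∞}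
    {E : Set (Fin n → ℝ)} (ha : Measurable a) (hE : MeasurableSet E) (hE₀ : volume E ≠ 0)
    (hE' : volume E ≠ ∞) (ha1 : ∀ x, 1 ≤ a x) (hr1 : ∀ x, 1 ≤ r x) {γ : ℝ} (hγ : 0 < γ)
    (hra : ∀ x, (r x)⁻¹ = (a x)⁻¹ + ENNReal.ofReal γ) :
    vnorm r (E.indicator fun _ => 1) ≤
      2 * (vnorm a (E.indicator fun _ => 1) * (volume E).toReal ^ γ) := by
  have hT : 0 < (volume E).toReal := ENNReal.toReal_pos hE₀ hE'
  have hc := modularV_const_inv_indicator_div_rpow hE hE₀ hE' hγ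
  calc vnorm r (E.indicator fun _ => 1)
      ≤ 2 * (vnorm a (E.indicator fun _ => 1) *
          vnorm (fun _ => (ENNReal.ofReal γ)⁻¹) (E.indicator fun _ => 1)) :=
        vnorm_indicator_le_two_mul_vnorm_mul_vnorm ha measurable_const hE hr1
          (fun x => ENNReal.inv_ne_zero.1 (by simp [hra x, hγ]))
          (fun x => by rw [inv_inv]; exact hra x)
          (exists_modularV_indicator_div_le_one ha1 hE hE') ⟨_, by positivity, hc.le⟩
    _ ≤ 2 * (vnorm a (E.indicator fun _ => 1) * (volume E).toReal ^ γ) := by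
        gcongr
        · exact vnorm_nonneg
        · exact vnorm_le_of_modularV_le_one (by positivity) hc.le

theorem mul_le_two_mul_mul_of_le_two_mul_rpow {T γ C x y z : ℝ} (hT : 0 < T) (hz : 0 ≤ z)
    (hx : x ≤ 2 * (y * T ^ γ)) (hC : T ^ (γ - 1) * y * z ≤ C) : x * z ≤ 2 * C * T := by
  calc x * z ≤ 2 * (y * T ^ γ) * z := mul_le_mul_of_nonneg_right hx hz
    _ = 2 * T * (T ^ (γ - 1) * y * z) := by rw [Real.rpow_sub_one hT.ne']; field_simp
    _ ≤ 2 * T * C := by gcongr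
    _ = 2 * C * T := by ring

theorem rpow_sub_one_mul_le_of_rpow_le {T γ C₁ C₂ x x' y y' : ℝ} (hT : 0 < T) (hx : 0 ≤ x)
    (hx' : 0 ≤ x') (hy : 0 ≤ y) (hy' : 0 ≤ y') (hxy' : (T / 2) ^ (1 + γ) ≤ x * y')
    (hxx' : x * x' ≤ C₁ * T) (hyy' : y * y' ≤ C₂ * T) :
    T ^ (γ - 1) * x' * y ≤ 2 ^ (1 + γ) * C₁ * C₂ := by
  have hT2 : T ^ (1 + γ) = T ^ (γ - 1) * T ^ 2 := by
    rw [← Real.rpow_natCast, ← Real.rpow_add hT]; norm_num; ring_nf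
  calc T ^ (γ - 1) * x' * y = 2 ^ (1 + γ) * ((T / 2) ^ (1 + γ) * (x' * y)) / T ^ 2 := by
        rw [Real.div_rpow hT.le zero_le_two, hT2]; field_simp
    _ ≤ 2 ^ (1 + γ) * (x * y' * (x' * y)) / T ^ 2 := by gcongr
    _ = 2 ^ (1 + γ) * ((x * x') * (y * y')) / T ^ 2 := by ring
    _ ≤ 2 ^ (1 + γ) * ((C₁ * T) * (C₂ * T)) / T ^ 2 := by
        gcongr 2 ^ (1 + γ) * ?_ / T ^ 2
        exact mul_le_mul hxx' hyy' (mul_nonneg hy hy') ((mul_nonneg hx hx').trans hxx')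
    _ = 2 ^ (1 + γ) * C₁ * C₂ := by field_simp

theorem vnorm_indicator_estimates {n : ℕ} {γ : ℝ} (hγ : 0 < γ)
    {p p' q q' : (Fin n → ℝ) → ℝ≥0∞} (hp : Measurable p) (hp' : Measurable p')
    (hq : Measurable q) (hq' : Measurable q') (hp1 : ∀ x, 1 ≤ p x)
    (hpp' : ∀ x, (p x)⁻¹ + (p' x)⁻¹ = 1) (hqq' : ∀ x, (q x)⁻¹ + (q' x)⁻¹ = 1)
    (hpq : ∀ x, (p x)⁻¹ = ENNReal.ofReal γ + (q x)⁻¹)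
    {E : Set (Fin n → ℝ)} (hE : MeasurableSet E) (hE₀ : volume E ≠ 0) (hE' : volume E ≠ ∞) :
    vnorm p (E.indicator fun _ => 1) ≤
        2 * (vnorm q (E.indicator fun _ => 1) * (volume E).toReal ^ γ) ∧
      vnorm q' (E.indicator fun _ => 1) ≤
        2 * (vnorm p' (E.indicator fun _ => 1) * (volume E).toReal ^ γ) ∧
      ((volume E).toReal / 2) ^ (1 + γ) ≤
        vnorm p (E.indicator fun _ => 1) * vnorm q' (E.indicator fun _ => 1) := by
  have hp'1 x : 1 ≤ p' x := ENNReal.inv_le_one.1 (le_add_self.trans (hpp' x).le)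
  have hq'1 x : 1 ≤ q' x := ENNReal.inv_le_one.1 (le_add_self.trans (hqq' x).le)
  have hq1 x : 1 ≤ q x := ENNReal.inv_le_one.1
    (le_add_self.trans ((hpq x).symm.trans_le (ENNReal.inv_le_one.2 (hp1 x))))
  have hq'p' x : (q' x)⁻¹ = (p' x)⁻¹ + ENNReal.ofReal γ :=
    (ENNReal.add_right_inj (ENNReal.inv_ne_top.2 (one_pos.trans_le (hq1 x)).ne')).1
      (by rw [hqq' x, ← hpp' x, hpq x]; ring)
  have hpq' x : ENNReal.ofReal (1 + γ) = (p x)⁻¹ + (q' x)⁻¹ := by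
    rw [hpq x, add_assoc, hqq' x, ENNReal.ofReal_add zero_le_one hγ.le, ENNReal.ofReal_one,
      add_comm]
  exact ⟨vnorm_indicator_le_two_mul_rpow hq hE hE₀ hE' hq1 hp1 hγ
      fun x => (hpq x).trans (add_comm _ _),
    vnorm_indicator_le_two_mul_rpow hp' hE hE₀ hE' hp'1 hq'1 hγ hq'p',
    rpow_le_vnorm_mul_vnorm hp hq' hE (by positivity) hpq'
      (exists_modularV_indicator_div_le_one hp1 hE hE')
      (exists_modularV_indicator_div_le_one hq'1 hE hE')⟩

theorem stmt7_general {n : ℕ} (hn : 0 < n) (α : ℝ) (h0 : 0 < α)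
    (p p' q q' : (Fin n → ℝ) → ℝ≥0∞)
    (hp : Measurable p) (hp'm : Measurable p') (hqm : Measurable q) (hq'm : Measurable q')
    (hp1 : ∀ x, 1 ≤ p x)
    (hconjp : ∀ x, 1 / p x + 1 / p' x = 1)
    (hconjq : ∀ x, 1 / q x + 1 / q' x = 1)
    (hqdef : ∀ x, 1 / p x = ENNReal.ofReal (α / n) + 1 / q x)
    (𝓔 : Set (Set (Fin n → ℝ)))
    (h𝓔 : ∀ E ∈ 𝓔, MeasurableSet E ∧ 0 < volume E ∧ volume E ≠ ∞) :
    (∃ C : ℝ, ∀ E ∈ 𝓔,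
        (volume E).toReal ^ (α / n - 1)
            * vnorm p' (Set.indicator E fun _ => (1:ℝ))
            * vnorm q (Set.indicator E fun _ => (1:ℝ)) ≤ C)
      ↔ ((∃ C : ℝ, ∀ E ∈ 𝓔,
            vnorm p (Set.indicator E fun _ => (1:ℝ))
              * vnorm p' (Set.indicator E fun _ => (1:ℝ)) ≤ C * (volume E).toReal)
          ∧ (∃ C : ℝ, ∀ E ∈ 𝓔,
            vnorm q (Set.indicator E fun _ => (1:ℝ))
              * vnorm q' (Set.indicator E fun _ => (1:ℝ)) ≤ C * (volume E).toReal)) := by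
  set γ := α / n
  have hγ : 0 < γ := div_pos h0 (Nat.cast_pos.2 hn)
  simp only [one_div] at hconjp hconjq hqdef
  have hT E (hE : E ∈ 𝓔) : 0 < (volume E).toReal :=
    ENNReal.toReal_pos (h𝓔 E hE).2.1.ne' (h𝓔 E hE).2.2
  have est E (hE : E ∈ 𝓔) := vnorm_indicator_estimates hγ hp hp'm hqm hq'm hp1 hconjp hconjq
    hqdef (h𝓔 E hE).1 (h𝓔 E hE).2.1.ne' (h𝓔 E hE).2.2
  constructor
  · rintro ⟨C, hC⟩
    refine ⟨⟨2 * C, fun E hE => ?_⟩, ⟨2 * C, fun E hE => ?_⟩⟩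
    · exact mul_le_two_mul_mul_of_le_two_mul_rpow (hT E hE) vnorm_nonneg (est E hE).1
        (by rw [mul_right_comm]; exact hC E hE)
    · rw [mul_comm]
      exact mul_le_two_mul_mul_of_le_two_mul_rpow (hT E hE) vnorm_nonneg (est E hE).2.1 (hC E hE)
  · rintro ⟨⟨C₁, hC₁⟩, ⟨C₂, hC₂⟩⟩
    exact ⟨2 ^ (1 + γ) * C₁ * C₂, fun E hE => rpow_sub_one_mul_le_of_rpow_le (hT E hE)
      vnorm_nonneg vnorm_nonneg vnorm_nonneg vnorm_nonneg (est E hE).2.2 (hC₁ E hE) (hC₂ E hE)⟩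

/-- Let `0 < α < n`, `p` measurable with `p_+ < n/α`, `q` defined by
`1/p(x) = α/n + 1/q(x)`. Then `p ∈ K_0^α(𝓔)` iff both `p ∈ K_0(𝓔)` and `q ∈ K_0(𝓔)`. -/
theorem stmt7 {n : ℕ} (hn : 0 < n) (α : ℝ) (h0 : 0 < α) (hα : α < n)
    (p p' q q' : (Fin n → ℝ) → ℝ≥0∞)
    (hp : Measurable p) (hp'm : Measurable p') (hqm : Measurable q) (hq'm : Measurable q')
    (hp1 : ∀ x, 1 ≤ p x)
    (hpub : essSup p volume < (n : ℝ≥0∞) / ENNReal.ofReal α)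
    (hconjp : ∀ x, 1 / p x + 1 / p' x = 1)
    (hconjq : ∀ x, 1 / q x + 1 / q' x = 1)
    (hqdef : ∀ x, 1 / p x = ENNReal.ofReal (α / n) + 1 / q x)
    (𝓔 : Set (Set (Fin n → ℝ)))
    (h𝓔 : ∀ E ∈ 𝓔, MeasurableSet E ∧ 0 < volume E ∧ volume E ≠ ∞) :
    (∃ C : ℝ, ∀ E ∈ 𝓔,
        (volume E).toReal ^ (α / n - 1)
            * vnorm p' (Set.indicator E fun _ => (1:ℝ))
            * vnorm q (Set.indicator E fun _ => (1:ℝ)) ≤ C)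
      ↔ ((∃ C : ℝ, ∀ E ∈ 𝓔,
            vnorm p (Set.indicator E fun _ => (1:ℝ))
              * vnorm p' (Set.indicator E fun _ => (1:ℝ)) ≤ C * (volume E).toReal)
          ∧ (∃ C : ℝ, ∀ E ∈ 𝓔,
            vnorm q (Set.indicator E fun _ => (1:ℝ))
              * vnorm q' (Set.indicator E fun _ => (1:ℝ)) ≤ C * (volume E).toReal)) :=
  stmt7_general hn α h0 p p' q q' hp hp'm hqm hq'm hp1 hconjp hconjq hqdef 𝓔 h𝓔
end

section
/- Let p : ℝⁿ → [1,∞) be measurable, D a cube of radius R, 0 < r ≤ R, and E ⊂ ℝⁿ with |D ∖ E| < (2r)ⁿ and p bounded above on D ∩ E. Then there exists a cube Q* ⊂ D of radius r such that for every positive integer m with mr ≤ R and every cube Q ⊂ D of radius mr, the harmonic mean satisfies p_{Q*∩E} ≤ p_{Q∩E}. -/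
open MeasureTheory ENNReal Set

/-- The (closed) cube `Q(c,r)` with center `c`, radius `r` (side length `2r`),
sides parallel to the coordinate axes. -/
def cube {n : ℕ} (c : Fin n → ℝ) (r : ℝ) : Set (Fin n → ℝ) := {y | ∀ i, |y i - c i| ≤ r}

/-- The harmonic mean `p_F = (avg_F 1/p)⁻¹` of `p` on `F`. -/
noncomputable def harmMean {n : ℕ} (p : (Fin n → ℝ) → ℝ) (F : Set (Fin n → ℝ)) : ℝ :=
  (⨍ x in F, (p x)⁻¹ ∂volume)⁻¹

/-!
Let `μ` be Lebesgue measure restricted to `E` and `w = μ.withDensity (1/p)`, so that the harmonic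
mean of `p` on `Q ∩ E` is `μ Q / w Q`. Both measures are dominated by Lebesgue measure, hence
`c ↦ w (Q(c,r)) / μ (Q(c,r))` is continuous, and it attains its maximum at some `y` on the compact
set of centres of radius-`r` cubes inside `D`; the denominator is positive there because
`|D \ E| < (2r)ⁿ`. A cube of radius `m r` inside `D` is the union of `mⁿ` cubes of radius `r`
inside `D` that overlap only in null sets, so both `w` and `μ` of it are the sums over these
subcubes, and its ratio `w / μ` is at most the maximal one.
-/

section Cube

variable {n : ℕ}

lemma cube_eq_pi (c : Fin n → ℝ) (ρ : ℝ) :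
    cube c ρ = pi univ fun i => Icc (c i - ρ) (c i + ρ) := by
  ext y
  simp only [mem_univ_pi]
  exact forall_congr' fun i => by rw [abs_sub_comm, mem_Icc_iff_abs_le]

lemma measurableSet_cube (c : Fin n → ℝ) (ρ : ℝ) : MeasurableSet (cube c ρ) := by
  rw [cube_eq_pi, pi_univ_Icc]
  exact measurableSet_Icc

lemma isCompact_cube (c : Fin n → ℝ) (ρ : ℝ) : IsCompact (cube c ρ) := by
  rw [cube_eq_pi, pi_univ_Icc]
  exact isCompact_Icc

lemma volume_cube (c : Fin n → ℝ) {ρ : ℝ} (hρ : 0 ≤ ρ) :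
    volume (cube c ρ) = ENNReal.ofReal ((2 * ρ) ^ n) := by
  simp only [cube_eq_pi, volume_pi_pi, Real.volume_Icc, add_sub_sub_cancel, ← two_mul,
    Finset.prod_const, Finset.card_univ, Fintype.card_fin,
    ENNReal.ofReal_pow (by positivity : 0 ≤ 2 * ρ)]

lemma volume_real_cube (c : Fin n → ℝ) {ρ : ℝ} (hρ : 0 ≤ ρ) :
    volume.real (cube c ρ) = (2 * ρ) ^ n := by
  rw [measureReal_def, volume_cube c hρ, ENNReal.toReal_ofReal (by positivity)]

lemma cube_subset_cube {c c' : Fin n → ℝ} {ρ ρ' : ℝ} (h : ∀ i, |c i - c' i| ≤ ρ' - ρ) :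
    cube c ρ ⊆ cube c' ρ' := fun y hy i => by
  linarith [hy i, h i, abs_sub_le (y i) (c i) (c' i)]

lemma cube_subset_cube_iff {c c' : Fin n → ℝ} {ρ ρ' : ℝ} (hρ : 0 ≤ ρ) :
    cube c ρ ⊆ cube c' ρ' ↔ ∀ i, |c i - c' i| ≤ ρ' - ρ := by
  refine ⟨fun h i => ?_, cube_subset_cube⟩
  rw [cube_eq_pi, cube_eq_pi, pi_univ_Icc, pi_univ_Icc,
    Icc_subset_Icc_iff fun i => by linarith] at h
  have := h.1 i
  have := h.2 i
  rw [abs_le]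
  constructor <;> linarith

end Cube

section Subdivision

variable {n : ℕ}

lemma exists_lt_mem_Icc_of_mem_Icc {a r x : ℝ} {m : ℕ} (hm : 0 < m)
    (hx : x ∈ Icc a (a + 2 * m * r)) : ∃ j < m, x ∈ Icc (a + 2 * j * r) (a + 2 * (j + 1) * r) := by
  induction m, hm using Nat.le_induction with
  | base => exact ⟨0, one_pos, by simpa using hx⟩
  | succ m hm ih =>
    by_cases h : x ≤ a + 2 * m * r
    · obtain ⟨j, hj, hxj⟩ := ih ⟨hx.1, h⟩
      exact ⟨j, by omega, hxj⟩
    · push_cast at hx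
      exact ⟨m, by omega, (not_le.1 h).le, hx.2⟩

lemma iUnion_fin_Icc_eq_Icc {a r : ℝ} {m : ℕ} (hm : 0 < m) (hr : 0 ≤ r) :
    ⋃ j : Fin m, Icc (a + 2 * j * r) (a + 2 * (j + 1) * r) = Icc a (a + 2 * m * r) := by
  refine subset_antisymm (iUnion_subset fun j => Icc_subset_Icc ?_ ?_) fun x hx => ?_
  · nlinarith [(j.val.cast_nonneg : (0 : ℝ) ≤ j)]
  · have : (j : ℝ) + 1 ≤ m := by exact_mod_cast j.isLt
    nlinarith
  · obtain ⟨j, hj, hxj⟩ := exists_lt_mem_Icc_of_mem_Icc hm hx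
    exact mem_iUnion.2 ⟨⟨j, hj⟩, hxj⟩

lemma volume_Icc_inter_Icc_of_ne {a r : ℝ} (hr : 0 ≤ r) {j j' : ℕ} (h : j ≠ j') :
    volume (Icc (a + 2 * j * r) (a + 2 * (j + 1) * r) ∩
      Icc (a + 2 * j' * r) (a + 2 * (j' + 1) * r)) = 0 := by
  wlog hlt : j < j' generalizing j j'
  · rw [inter_comm]
    exact this h.symm (lt_of_le_of_ne (not_lt.1 hlt) h.symm)
  have : (j : ℝ) + 1 ≤ j' := by exact_mod_cast hlt
  refine measure_mono_null (t := Icc (a + 2 * j' * r) (a + 2 * (j + 1) * r))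
    (fun x hx => ⟨hx.2.1, hx.1.2⟩) ?_
  rw [Real.volume_Icc, ENNReal.ofReal_eq_zero]
  nlinarith

/-- The centres of the `mⁿ` cubes of radius `r` tiling `cube z (m * r)`. -/
def subcubeCenter (z : Fin n → ℝ) (m : ℕ) (r : ℝ) (k : Fin n → Fin m) : Fin n → ℝ :=
  fun i => z i + (2 * k i + 1 - m) * r

lemma cube_subcubeCenter (z : Fin n → ℝ) (m : ℕ) (r : ℝ) (k : Fin n → Fin m) :
    cube (subcubeCenter z m r k) r =
      pi univ fun i => Icc (z i - m * r + 2 * (k i) * r) (z i - m * r + 2 * (k i + 1) * r) := by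
  rw [cube_eq_pi]
  congr! 2 with i
  simp only [subcubeCenter]
  congr 1 <;> ring

lemma iUnion_cube_subcubeCenter (z : Fin n → ℝ) {m : ℕ} (hm : 0 < m) {r : ℝ} (hr : 0 ≤ r) :
    ⋃ k, cube (subcubeCenter z m r k) r = cube z (m * r) := by
  simp only [cube_subcubeCenter]
  rw [iUnion_univ_pi (fun i (j : Fin m) => Icc (z i - m * r + 2 * j * r)
    (z i - m * r + 2 * (j + 1) * r)), cube_eq_pi]
  congr! 2 with i
  rw [iUnion_fin_Icc_eq_Icc hm hr]
  congr 1; ring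

lemma cube_subcubeCenter_subset (z : Fin n → ℝ) {m : ℕ} (hm : 0 < m) {r : ℝ} (hr : 0 ≤ r)
    (k : Fin n → Fin m) : cube (subcubeCenter z m r k) r ⊆ cube z (m * r) :=
  (subset_iUnion _ k).trans (iUnion_cube_subcubeCenter z hm hr).le

lemma volume_cube_subcubeCenter_inter {z : Fin n → ℝ} {m : ℕ} {r : ℝ} (hr : 0 ≤ r)
    {k k' : Fin n → Fin m} (h : k ≠ k') :
    volume (cube (subcubeCenter z m r k) r ∩ cube (subcubeCenter z m r k') r) = 0 := by
  obtain ⟨i, hi⟩ := Function.ne_iff.1 h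
  rw [cube_subcubeCenter, cube_subcubeCenter, ← pi_inter_distrib, volume_pi_pi]
  exact Finset.prod_eq_zero (Finset.mem_univ i)
    (volume_Icc_inter_Icc_of_ne hr (Fin.val_ne_of_ne hi))

theorem measure_cube_eq_sum_subcubes {ν : Measure (Fin n → ℝ)} (hν : ν ≪ volume)
    (z : Fin n → ℝ) {m : ℕ} (hm : 0 < m) {r : ℝ} (hr : 0 ≤ r) :
    ν (cube z (m * r)) = ∑ k, ν (cube (subcubeCenter z m r k) r) := by
  rw [← iUnion_cube_subcubeCenter z hm hr,
    measure_iUnion₀ _ fun k => (measurableSet_cube _ _).nullMeasurableSet, tsum_fintype]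
  exact fun k k' h => hν (volume_cube_subcubeCenter_inter hr h)

end Subdivision

section MeasureBelowVolume

variable {n : ℕ} {ν : Measure (Fin n → ℝ)}

lemma measure_cube_ne_top (hν : ν ≤ volume) (c : Fin n → ℝ) (ρ : ℝ) : ν (cube c ρ) ≠ ∞ :=
  ne_top_of_le_ne_top (isCompact_cube c ρ).measure_lt_top.ne (hν _)

theorem measureReal_cube_eq_sum_subcubes (hν : ν ≤ volume) (z : Fin n → ℝ) {m : ℕ} (hm : 0 < m)
    {r : ℝ} (hr : 0 ≤ r) :
    ν.real (cube z (m * r)) = ∑ k, ν.real (cube (subcubeCenter z m r k) r) := by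
  rw [measureReal_def, measure_cube_eq_sum_subcubes (Measure.absolutelyContinuous_of_le hν) z hm hr,
    ENNReal.toReal_sum fun k _ => measure_cube_ne_top hν _ _]
  rfl

lemma measureReal_sub_le_volume_real_sub (hν : ν ≤ volume) {s t : Set (Fin n → ℝ)} (hst : s ⊆ t)
    (hs : MeasurableSet s) (ht : volume t ≠ ∞) :
    ν.real t - ν.real s ≤ volume.real t - volume.real s := by
  have hνt : ν t ≠ ∞ := ne_top_of_le_ne_top ht (hν t)
  rw [← measureReal_sdiff hst hs hνt, ← measureReal_sdiff hst hs ht]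
  exact ENNReal.toReal_mono (measure_ne_top_of_subset sdiff_subset ht) (hν _)

/-- Both `cube a r` and `cube b r` lie between `cube b (r - d)` and `cube b (r + d)`,
`d = dist a b`, and the shell between these has volume `(2(r + d))ⁿ - (2(r - d))ⁿ`. -/
lemma abs_measureReal_cube_sub_le (hν : ν ≤ volume) {a b : Fin n → ℝ} {r : ℝ}
    (hab : dist a b ≤ r) :
    |ν.real (cube a r) - ν.real (cube b r)| ≤
      (2 * (r + dist a b)) ^ n - (2 * (r - dist a b)) ^ n := by
  set d := dist a b
  have hd : 0 ≤ d := dist_nonneg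
  have hcoord : ∀ i, |a i - b i| ≤ d := fun i => (Real.dist_eq _ _).ge.trans (dist_le_pi_dist a b i)
  have hin : ∀ c, (∀ i, |c i - b i| ≤ d) → cube b (r - d) ⊆ cube c r ∧ cube c r ⊆ cube b (r + d) :=
    fun c hc => ⟨cube_subset_cube fun i => by rw [abs_sub_comm]; linarith [hc i],
      cube_subset_cube fun i => by linarith [hc i]⟩
  have hb : ∀ i, |b i - b i| ≤ d := fun i => by simpa using hd
  have mono : ∀ {s c ρ}, s ⊆ cube c ρ → ν.real s ≤ ν.real (cube c ρ) := fun hs =>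
    measureReal_mono hs (measure_cube_ne_top hν _ _)
  have ha := hin a hcoord
  have hb' := hin b hb
  calc |ν.real (cube a r) - ν.real (cube b r)|
      ≤ ν.real (cube b (r + d)) - ν.real (cube b (r - d)) := by
        rw [abs_sub_le_iff]
        constructor <;> linarith [mono ha.1, mono ha.2, mono hb'.1, mono hb'.2]
    _ ≤ volume.real (cube b (r + d)) - volume.real (cube b (r - d)) :=
        measureReal_sub_le_volume_real_sub hν (hb'.1.trans hb'.2) (measurableSet_cube _ _)
          (isCompact_cube _ _).measure_lt_top.ne
    _ = (2 * (r + d)) ^ n - (2 * (r - d)) ^ n := by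
        rw [volume_real_cube _ (by linarith), volume_real_cube _ (by linarith)]

theorem continuous_measureReal_cube (hν : ν ≤ volume) {r : ℝ} (hr : 0 < r) :
    Continuous fun c => ν.real (cube c r) := by
  refine continuous_iff_continuousAt.2 fun b => ?_
  rw [ContinuousAt, tendsto_iff_dist_tendsto_zero]
  have hshell : Filter.Tendsto (fun a => (2 * (r + dist a b)) ^ n - (2 * (r - dist a b)) ^ n)
      (nhds b) (nhds 0) := by
    have : Continuous fun a => (2 * (r + dist a b)) ^ n - (2 * (r - dist a b)) ^ n := by fun_prop
    simpa using this.tendsto b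
  refine squeeze_zero' (Filter.Eventually.of_forall fun _ => dist_nonneg) ?_ hshell
  filter_upwards [Metric.closedBall_mem_nhds b hr] with a ha
  exact (Real.dist_eq _ _).trans_le (abs_measureReal_cube_sub_le hν ha)

end MeasureBelowVolume

theorem exists_cube_forall_measureReal_div_le {n : ℕ} {μ w : Measure (Fin n → ℝ)}
    (hμ : μ ≤ volume) (hw : w ≤ volume) {x₀ : Fin n → ℝ} {R r : ℝ} (hr : 0 < r) (hrR : r ≤ R)
    (hpos : ∀ c, cube c r ⊆ cube x₀ R → 0 < μ (cube c r)) :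
    ∃ y, cube y r ⊆ cube x₀ R ∧ ∀ m : ℕ, 0 < m → ∀ z, cube z (m * r) ⊆ cube x₀ R →
      w.real (cube z (m * r)) / μ.real (cube z (m * r)) ≤
        w.real (cube y r) / μ.real (cube y r) := by
  have hK : ∀ c, c ∈ cube x₀ (R - r) ↔ cube c r ⊆ cube x₀ R := fun c =>
    (cube_subset_cube_iff hr.le).symm
  have hμpos : ∀ c, cube c r ⊆ cube x₀ R → 0 < μ.real (cube c r) := fun c hc =>
    ENNReal.toReal_pos (hpos c hc).ne' (measure_cube_ne_top hμ c r)
  have hcont : ContinuousOn (fun c => w.real (cube c r) / μ.real (cube c r)) (cube x₀ (R - r)) :=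
    (continuous_measureReal_cube hw hr).continuousOn.div
      (continuous_measureReal_cube hμ hr).continuousOn fun c hc => (hμpos c ((hK c).1 hc)).ne'
  obtain ⟨y, hyK, hmax⟩ := (isCompact_cube x₀ (R - r)).exists_isMaxOn
    ⟨x₀, fun i => by simpa using hrR⟩ hcont
  refine ⟨y, (hK y).1 hyK, fun m hm z hz => ?_⟩
  have hsub : ∀ k, cube (subcubeCenter z m r k) r ⊆ cube x₀ R := fun k =>
    (cube_subcubeCenter_subset z hm hr.le k).trans hz
  have hQ : 0 < μ.real (cube z (m * r)) :=
    (hμpos _ (hsub fun _ => ⟨0, hm⟩)).trans_le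
      (measureReal_mono (cube_subcubeCenter_subset z hm hr.le _) (measure_cube_ne_top hμ _ _))
  rw [div_le_iff₀ hQ, measureReal_cube_eq_sum_subcubes hw z hm hr.le,
    measureReal_cube_eq_sum_subcubes hμ z hm hr.le, Finset.mul_sum]
  refine Finset.sum_le_sum fun k _ => ?_
  rw [← div_le_iff₀ (hμpos _ (hsub k))]
  exact hmax ((hK _).2 (hsub k))

lemma measure_inter_pos_of_measure_sdiff_lt {α : Type*} [MeasurableSpace α] {μ : Measure α}
    {s D E : Set α} (hs : s ⊆ D) (h : μ (D \ E) < μ s) : 0 < μ (s ∩ E) := by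
  refine pos_iff_ne_zero.2 fun h0 => h.not_ge ?_
  calc μ s ≤ μ (s ∩ E) + μ (s \ E) := measure_le_inter_add_sdiff μ s E
    _ ≤ μ (D \ E) := by rw [h0, zero_add]; exact measure_mono (sdiff_subset_sdiff_left hs)

lemma harmMean_inter_eq {n : ℕ} {p : (Fin n → ℝ) → ℝ} (hp : Measurable p) (hp0 : ∀ x, 0 ≤ p x)
    (E : Set (Fin n → ℝ)) {s : Set (Fin n → ℝ)} (hs : MeasurableSet s) :
    harmMean p (s ∩ E) =
      (((volume.restrict E).withDensity fun x => ENNReal.ofReal (p x)⁻¹).real s /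
        (volume.restrict E).real s)⁻¹ := by
  rw [harmMean, setAverage_eq, integral_eq_lintegral_of_nonneg_ae
    (Filter.Eventually.of_forall fun x => inv_nonneg.2 (hp0 x)) hp.inv.aestronglyMeasurable,
    measureReal_restrict_apply hs, measureReal_def, measureReal_def, withDensity_apply _ hs,
    Measure.restrict_restrict hs, smul_eq_mul, div_eq_inv_mul]

theorem stmt9_general {n : ℕ} (p : (Fin n → ℝ) → ℝ)
    (hp : Measurable p) (hp1 : ∀ x, 1 ≤ p x)
    (x₀ : Fin n → ℝ) (R r : ℝ) (hr : 0 < r) (hrR : r ≤ R)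
    (E : Set (Fin n → ℝ))
    (hsmall : volume (cube x₀ R \ E) < ENNReal.ofReal ((2 * r) ^ n)) :
    ∃ y : Fin n → ℝ, cube y r ⊆ cube x₀ R ∧
      ∀ m : ℕ, 0 < m → (m : ℝ) * r ≤ R →
        ∀ z : Fin n → ℝ, cube z ((m : ℝ) * r) ⊆ cube x₀ R →
          harmMean p (cube y r ∩ E) ≤ harmMean p (cube z ((m : ℝ) * r) ∩ E) := by
  set μ := volume.restrict E
  set w := μ.withDensity fun x => ENNReal.ofReal (p x)⁻¹
  have hμ : μ ≤ volume := Measure.restrict_le_self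
  have hw : w ≤ volume := (withDensity_mono (Filter.Eventually.of_forall fun x =>
    ENNReal.ofReal_le_one.2 (inv_le_one_of_one_le₀ (hp1 x)))).trans (withDensity_one.trans_le hμ)
  have hμpos : ∀ c ρ, r ≤ ρ → cube c ρ ⊆ cube x₀ R → 0 < μ (cube c ρ) := fun c ρ hρ hc => by
    rw [Measure.restrict_apply (measurableSet_cube c ρ)]
    refine measure_inter_pos_of_measure_sdiff_lt hc (hsmall.trans_le ?_)
    rw [volume_cube c (hr.le.trans hρ)]
    gcongr
  obtain ⟨y, hy, hmax⟩ := exists_cube_forall_measureReal_div_le hμ hw hr hrR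
    fun c => hμpos c r le_rfl
  refine ⟨y, hy, fun m hm _ z hz => ?_⟩
  have hμQ := hμpos z (m * r) (le_mul_of_one_le_left hr.le (by exact_mod_cast hm)) hz
  have hwQ : w (cube z (m * r)) ≠ 0 := fun h0 => hμQ.ne' <|
    withDensity_absolutelyContinuous' (by fun_prop) (Filter.Eventually.of_forall fun x =>
      (ENNReal.ofReal_pos.2 (inv_pos.2 (zero_lt_one.trans_le (hp1 x)))).ne') h0
  rw [harmMean_inter_eq hp (fun x => zero_le_one.trans (hp1 x)) E (measurableSet_cube _ _),
    harmMean_inter_eq hp (fun x => zero_le_one.trans (hp1 x)) E (measurableSet_cube _ _)]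
  exact inv_anti₀ (div_pos (ENNReal.toReal_pos hwQ (measure_cube_ne_top hw _ _))
    (ENNReal.toReal_pos hμQ.ne' (measure_cube_ne_top hμ _ _))) (hmax m hm z hz)

/-- Let `p : ℝⁿ → [1,∞)` be measurable, `D` a cube of radius `R`,
`0 < r ≤ R`, and `E ⊆ ℝⁿ` with `|D ∖ E| < (2r)ⁿ` and `p` bounded above on `D ∩ E`.
Then there is a cube `Q* ⊆ D` of radius `r` such that for every positive integer `m`
with `mr ≤ R` and every cube `Q ⊆ D` of radius `mr`, `p_{Q*∩E} ≤ p_{Q∩E}`. -/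
theorem stmt9 {n : ℕ} (hn : 0 < n) (p : (Fin n → ℝ) → ℝ)
    (hp : Measurable p) (hp1 : ∀ x, 1 ≤ p x)
    (x₀ : Fin n → ℝ) (R r : ℝ) (hr : 0 < r) (hrR : r ≤ R)
    (E : Set (Fin n → ℝ)) (hE : MeasurableSet E)
    (hsmall : volume (cube x₀ R \ E) < ENNReal.ofReal ((2 * r) ^ n))
    (M : ℝ) (hbd : ∀ x ∈ cube x₀ R ∩ E, p x ≤ M) :
    ∃ y : Fin n → ℝ, cube y r ⊆ cube x₀ R ∧
      ∀ m : ℕ, 0 < m → (m : ℝ) * r ≤ R →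
        ∀ z : Fin n → ℝ, cube z ((m : ℝ) * r) ⊆ cube x₀ R →
          harmMean p (cube y r ∩ E) ≤ harmMean p (cube z ((m : ℝ) * r) ∩ E) :=
  stmt9_general p hp hp1 x₀ R r hr hrR E hsmall
end

section
/- Two cubes P_{j₁}^k and P_{j₂}^k forming (t,u₁)-pairs at dyadic radii are disjoint: if u₁,…,u_n is an orthonormal basis, r_j = 2^{j−1} r, cubes Q_j have common lower corner lc and radii r_j, and P_j is the translate of Q_j by t r_j √n u₁ with t > 4, then for j₁ > j₂, any points a ∈ P_{j₁} and b ∈ P_{j₂} satisfy |a − b| ≥ ((t−4)/2) r_{j₁} > 0. -/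
open Finset

/-- Two cubes `P_{j₁}` and `P_{j₂}` forming `(t,u₁)`-pairs at dyadic radii
are disjoint: if `u₁,…,u_n` is orthonormal, `r_j = 2^{j−1} r`, the cubes `Q_j` share the
lower corner `lc` and `P_j` is the translate of `Q_j` by `t r_j √n u₁` with `t > 4`, then
for `j₁ > j₂`, any `a ∈ P_{j₁}`, `b ∈ P_{j₂}` satisfy `|a − b| ≥ ((t−4)/2) r_{j₁} > 0`. -/
theorem stmt12 {n : ℕ} (hn : 0 < n) (t r : ℝ) (ht : 4 < t) (hr : 0 < r)
    (u : Fin n → (Fin n → ℝ))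
    (horth : ∀ i j, ∑ k, u i k * u j k = if i = j then (1 : ℝ) else 0)
    (lc : Fin n → ℝ) (j₁ j₂ : ℕ) (h1 : 1 ≤ j₂) (hj : j₂ < j₁)
    (s w : Fin n → ℝ)
    (hs : ∀ i, 0 ≤ s i ∧ s i ≤ 2 * ((2 : ℝ) ^ (j₁ - 1) * r))
    (hw : ∀ i, 0 ≤ w i ∧ w i ≤ 2 * ((2 : ℝ) ^ (j₂ - 1) * r))
    (a b : Fin n → ℝ)
    (ha : a = lc + (t * ((2 : ℝ) ^ (j₁ - 1) * r) * Real.sqrt n) • u ⟨0, hn⟩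
        + ∑ i, s i • u i)
    (hb : b = lc + (t * ((2 : ℝ) ^ (j₂ - 1) * r) * Real.sqrt n) • u ⟨0, hn⟩
        + ∑ i, w i • u i) :
    (t - 4) / 2 * ((2 : ℝ) ^ (j₁ - 1) * r) ≤ Real.sqrt (∑ k, (a k - b k) ^ 2)
      ∧ 0 < Real.sqrt (∑ k, (a k - b k) ^ 2) := by
  set r1 : ℝ := (2 : ℝ) ^ (j₁ - 1) * r with hr1def
  set r2 : ℝ := (2 : ℝ) ^ (j₂ - 1) * r with hr2def
  set z : Fin n := ⟨0, hn⟩ with hz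
  -- the component of a - b along u z
  set c : ℝ := ∑ k, (a k - b k) * u z k with hc
  have expand : ∀ k, a k - b k
      = (t * r1 * Real.sqrt n - t * r2 * Real.sqrt n) * u z k
        + ∑ i, (s i - w i) * u i k := by
    intro k
    rw [ha, hb]
    simp only [Pi.add_apply, Pi.smul_apply, smul_eq_mul, Finset.sum_apply]
    have h2 : ∑ i, (s i - w i) * u i k = ∑ i, (s i * u i k - w i * u i k) :=
      Finset.sum_congr rfl fun i _ => by ring
    rw [h2, Finset.sum_sub_distrib]
    ring
  have key : c = t * r1 * Real.sqrt n - t * r2 * Real.sqrt n + (s z - w z) := by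
    rw [hc]
    calc ∑ k, (a k - b k) * u z k
        = ∑ k, ((t * r1 * Real.sqrt n - t * r2 * Real.sqrt n) * (u z k * u z k)
            + ∑ i, (s i - w i) * (u i k * u z k)) := by
          refine Finset.sum_congr rfl fun k _ => ?_
          rw [expand k, add_mul, Finset.sum_mul]
          congr 1
          · ring
          · exact Finset.sum_congr rfl fun i _ => by ring
      _ = (t * r1 * Real.sqrt n - t * r2 * Real.sqrt n) * (∑ k, u z k * u z k)
            + ∑ i, (s i - w i) * ∑ k, u i k * u z k := by
          rw [Finset.sum_add_distrib, ← Finset.mul_sum]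
          rw [Finset.sum_comm]
          simp_rw [← Finset.mul_sum]
      _ = t * r1 * Real.sqrt n - t * r2 * Real.sqrt n + (s z - w z) := by
          have hterm : ∀ i ∈ Finset.univ, (s i - w i) * ∑ k, u i k * u z k
              = if i = z then s z - w z else 0 := by
            intro i _
            rw [horth i z]
            by_cases h : i = z
            · subst h; simp
            · simp [h]
          rw [Finset.sum_congr rfl hterm, Finset.sum_ite_eq' Finset.univ z, horth z z]
          simp
  -- numeric facts
  have hsn : (1 : ℝ) ≤ Real.sqrt n := by
    rw [show (1:ℝ) = Real.sqrt 1 by simp]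
    exact Real.sqrt_le_sqrt (by exact_mod_cast hn)
  have hr1pos : 0 < r1 := mul_pos (by positivity) hr
  have hr2pos : 0 < r2 := mul_pos (by positivity) hr
  have h12 : 2 * r2 ≤ r1 := by
    rw [hr1def, hr2def]
    have : (2 : ℝ) ^ (j₂ - 1) * 2 ≤ (2 : ℝ) ^ (j₁ - 1) := by
      rw [mul_comm, ← pow_succ']
      exact pow_le_pow_right₀ one_le_two (by omega)
    nlinarith
  have hclb : (t - 4) / 2 * r1 ≤ c := by
    rw [key]
    have hs0 := (hs z).1
    have hw0 := (hw z).2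
    nlinarith [mul_le_mul_of_nonneg_left hsn (by nlinarith : (0:ℝ) ≤ t * r1 - t * r2)]
  have hcpos : 0 < c := lt_of_lt_of_le (by nlinarith) hclb
  -- Cauchy-Schwarz
  have hu1 : ∑ k, u z k ^ 2 = 1 := by
    have := horth z z
    simpa [sq] using this
  have cs : c ^ 2 ≤ ∑ k, (a k - b k) ^ 2 := by
    have := Finset.sum_mul_sq_le_sq_mul_sq Finset.univ (fun k => a k - b k) (u z)
    rw [hu1, mul_one] at this
    exact this
  have hle : c ≤ Real.sqrt (∑ k, (a k - b k) ^ 2) := by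
    have := Real.sqrt_le_sqrt cs
    rwa [Real.sqrt_sq hcpos.le] at this
  exact ⟨le_trans hclb hle, lt_of_lt_of_le (lt_of_lt_of_le (by nlinarith) hclb) hle⟩
end
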